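/- Let f, g, m, n, p : ℝ² → ℂ be smooth functions satisfying the Dirac system (4-1): ∂g = −p f, ∂̄f = p̄ g, ∂n = −p̄ m, ∂̄m = p n, where ∂F := (∂₁F − i ∂₂F)/2 and ∂̄F := (∂₁F + i ∂₂F)/2. Then there exist differentiable functions Z₁, Z₂ : ℝ² → ℂ such that on all of ℝ²: ∂Z₁ = f·m, ∂̄Z₁ = −g·n, ∂Z₂ = f·n̄, and ∂̄Z₂ = g·m̄; equivalently, dZ₁ = f m dz − g n dz̄ and dZ₂ = f n̄ dz + g m̄ dz̄. (Proposition 4.2(2): solutions of the submanifold Dirac equation on a conformal surface in E⁴ produce the coordinates Z¹, Z² of the immersion via the generalized Weierstrass representation.) -/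

import Mathlib

open Complex

/-- partial derivative in the first coordinate direction -/
noncomputable def pd1 (F : ℝ × ℝ → ℂ) (z : ℝ × ℝ) : ℂ := fderiv ℝ F z (1, 0)

/-- partial derivative in the second coordinate direction -/
noncomputable def pd2 (F : ℝ × ℝ → ℂ) (z : ℝ × ℝ) : ℂ := fderiv ℝ F z (0, 1)

/-- Wirtinger derivative `∂F := (∂₁F − i ∂₂F)/2` -/
noncomputable def wd (F : ℝ × ℝ → ℂ) (z : ℝ × ℝ) : ℂ := (pd1 F z - Complex.I * pd2 F z) / 2

/-- Wirtinger derivative `∂̄F := (∂₁F + i ∂₂F)/2` -/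
noncomputable def wdbar (F : ℝ × ℝ → ℂ) (z : ℝ × ℝ) : ℂ := (pd1 F z + Complex.I * pd2 F z) / 2

/-! ### Auxiliary material: a Poincaré-type lemma on `ℝ × ℝ` -/

/-- The pointwise derivative (in `x`) of the homotopy integrand
`w ↦ w.1 • A (t • w) + w.2 • B (t • w)`. -/
noncomputable def Kmap (A B : ℝ × ℝ → ℂ) (t : ℝ) (x : ℝ × ℝ) : (ℝ × ℝ) →L[ℝ] ℂ :=
  (x.1 • ((fderiv ℝ A (t • x)).comp (t • ContinuousLinearMap.id ℝ (ℝ × ℝ))) +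
    (ContinuousLinearMap.fst ℝ ℝ ℝ).smulRight (A (t • x))) +
  (x.2 • ((fderiv ℝ B (t • x)).comp (t • ContinuousLinearMap.id ℝ (ℝ × ℝ))) +
    (ContinuousLinearMap.snd ℝ ℝ ℝ).smulRight (B (t • x)))

lemma clm_decomp (L : (ℝ × ℝ) →L[ℝ] ℂ) (v : ℝ × ℝ) :
    L v = v.1 • L (1, 0) + v.2 • L (0, 1) := by
  have hv : v = v.1 • ((1:ℝ), (0:ℝ)) + v.2 • ((0:ℝ), (1:ℝ)) := by
    ext <;> simp
  conv_lhs => rw [hv]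
  rw [map_add, map_smul, map_smul]

/-- Poincaré lemma on `ℝ × ℝ`: a closed smooth 1-form `A dx + B dy` has a primitive. -/
lemma exists_primitive (A B : ℝ × ℝ → ℂ) (hA : ContDiff ℝ (⊤ : ℕ∞) A) (hB : ContDiff ℝ (⊤ : ℕ∞) B)
    (hcl : ∀ z, pd2 A z = pd1 B z) :
    ∃ Z : ℝ × ℝ → ℂ, Differentiable ℝ Z ∧ ∀ z, pd1 Z z = A z ∧ pd2 Z z = B z := by
  have hA' : Continuous (fderiv ℝ A) := hA.continuous_fderiv (by simp)
  have hB' : Continuous (fderiv ℝ B) := hB.continuous_fderiv (by simp)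
  have hAc : Continuous A := hA.continuous
  have hBc : Continuous B := hB.continuous
  set Z : ℝ × ℝ → ℂ := fun x => ∫ t in (0:ℝ)..1, (x.1 • A (t • x) + x.2 • B (t • x)) with hZ
  have hder : ∀ (t : ℝ) (x : ℝ × ℝ),
      HasFDerivAt (fun w : ℝ × ℝ => w.1 • A (t • w) + w.2 • B (t • w)) (Kmap A B t x) x := by
    intro t x
    have h1 : HasFDerivAt (fun w : ℝ × ℝ => t • w) (t • ContinuousLinearMap.id ℝ (ℝ × ℝ)) x := by
      exact (t • ContinuousLinearMap.id ℝ (ℝ × ℝ)).hasFDerivAt (x := x)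
    exact ((hasFDerivAt_fst.smul
        (((hA.differentiable (by simp) (t • x)).hasFDerivAt).comp x h1))).add
      ((hasFDerivAt_snd.smul
        (((hB.differentiable (by simp) (t • x)).hasFDerivAt).comp x h1)))
  have hsmul : Continuous fun p : ℝ × (ℝ × ℝ) => p.1 • p.2 := continuous_fst.smul continuous_snd
  have hKcont : Continuous fun p : ℝ × (ℝ × ℝ) => Kmap A B p.1 p.2 := by
    apply Continuous.add
    · apply Continuous.add
      · exact (continuous_snd.fst).smul
          ((hA'.comp hsmul).clm_comp (continuous_fst.smul continuous_const))
      · exact ((ContinuousLinearMap.smulRightL ℝ (ℝ × ℝ) ℂ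
          (ContinuousLinearMap.fst ℝ ℝ ℝ)).continuous).comp (hAc.comp hsmul)
    · apply Continuous.add
      · exact (continuous_snd.snd).smul
          ((hB'.comp hsmul).clm_comp (continuous_fst.smul continuous_const))
      · exact ((ContinuousLinearMap.smulRightL ℝ (ℝ × ℝ) ℂ
          (ContinuousLinearMap.snd ℝ ℝ ℝ)).continuous).comp (hBc.comp hsmul)
  have key : ∀ x₀ : ℝ × ℝ, HasFDerivAt Z (∫ t in (0:ℝ)..1, Kmap A B t x₀) x₀ := by
    intro x₀
    obtain ⟨C, hC⟩ : ∃ C, ∀ q ∈ (Set.Icc (0:ℝ) 1 ×ˢ Metric.closedBall x₀ 1),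
        ‖Kmap A B q.1 q.2‖ ≤ C :=
      (isCompact_Icc.prod (isCompact_closedBall x₀ 1)).exists_bound_of_continuousOn
        hKcont.continuousOn
    have := intervalIntegral.hasFDerivAt_integral_of_dominated_of_fderiv_le
      (F := fun (x : ℝ × ℝ) (t : ℝ) => x.1 • A (t • x) + x.2 • B (t • x))
      (F' := fun (x : ℝ × ℝ) (t : ℝ) => Kmap A B t x) (x₀ := x₀) (a := 0) (b := 1)
      (bound := fun _ => C) (μ := MeasureTheory.volume) (Metric.ball_mem_nhds x₀ zero_lt_one)
      (Filter.Eventually.of_forall fun x =>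
        (((hAc.comp (continuous_id.smul continuous_const)).const_smul x.1).add
          ((hBc.comp (continuous_id.smul continuous_const)).const_smul x.2)).aestronglyMeasurable)
      ((((hAc.comp (continuous_id.smul continuous_const)).const_smul x₀.1).add
          ((hBc.comp (continuous_id.smul continuous_const)).const_smul x₀.2)).intervalIntegrable 0 1)
      ((hKcont.comp (continuous_id.prodMk continuous_const)).aestronglyMeasurable)
      (MeasureTheory.ae_of_all _ fun t ht x hx => by
        refine hC (t, x) ⟨?_, Metric.ball_subset_closedBall hx⟩
        rw [Set.uIoc_of_le zero_le_one] at ht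
        exact Set.Ioc_subset_Icc_self ht)
      (intervalIntegrable_const)
      (MeasureTheory.ae_of_all _ fun t ht x hx => hder t x)
    exact this
  refine ⟨Z, fun x₀ => (key x₀).differentiableAt, fun x₀ => ?_⟩
  have hfd := (key x₀).fderiv
  have hKint : IntervalIntegrable (fun t => Kmap A B t x₀) MeasureTheory.volume 0 1 :=
    ((hKcont.comp (continuous_id.prodMk continuous_const)).intervalIntegrable 0 1)
  constructor
  · have hKeval : ∀ t : ℝ, Kmap A B t x₀ (1, 0) = A (t • x₀) + t • (fderiv ℝ A (t • x₀)) x₀ := by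
      intro t
      have h1 : fderiv ℝ B (t • x₀) (1, 0) = fderiv ℝ A (t • x₀) (0, 1) := (hcl (t • x₀)).symm
      have h2 := clm_decomp (fderiv ℝ A (t • x₀)) x₀
      simp [Kmap, ContinuousLinearMap.smulRight_apply, h1, h2, smul_smul]
      ring
    have hderiv : ∀ t ∈ Set.uIcc (0:ℝ) 1, HasDerivAt (fun s : ℝ => s • A (s • x₀))
        (A (t • x₀) + t • (fderiv ℝ A (t • x₀)) x₀) t := by
      intro t _
      have h1 : HasDerivAt (fun s : ℝ => s • x₀) x₀ t := by
        simpa using (hasDerivAt_id t).smul_const x₀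
      have h2 : HasDerivAt (fun s : ℝ => A (s • x₀)) ((fderiv ℝ A (t • x₀)) x₀) t :=
        ((hA.differentiable (by simp) (t • x₀)).hasFDerivAt).comp_hasDerivAt t h1
      have := (hasDerivAt_id' t).smul h2
      exact this.congr_deriv (by simp [add_comm])
    have hcont : Continuous fun t : ℝ => A (t • x₀) + t • (fderiv ℝ A (t • x₀)) x₀ :=
      (hAc.comp (continuous_id.smul continuous_const)).add
        (continuous_id.smul ((hA'.comp (continuous_id.smul continuous_const)).clm_apply
          continuous_const))
    have hftc := intervalIntegral.integral_eq_sub_of_hasDerivAt hderiv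
      (hcont.intervalIntegrable 0 1)
    have hpd : pd1 Z x₀ = ∫ t in (0:ℝ)..1, Kmap A B t x₀ (1, 0) := by
      rw [pd1, hfd, ContinuousLinearMap.intervalIntegral_apply hKint]
    rw [hpd]
    simp only [hKeval]
    rw [hftc]
    simp
  · have hKeval : ∀ t : ℝ, Kmap A B t x₀ (0, 1) = B (t • x₀) + t • (fderiv ℝ B (t • x₀)) x₀ := by
      intro t
      have h1 : fderiv ℝ A (t • x₀) (0, 1) = fderiv ℝ B (t • x₀) (1, 0) := hcl (t • x₀)
      have h2 := clm_decomp (fderiv ℝ B (t • x₀)) x₀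
      simp [Kmap, ContinuousLinearMap.smulRight_apply, h1, h2, smul_smul]
      ring
    have hderiv : ∀ t ∈ Set.uIcc (0:ℝ) 1, HasDerivAt (fun s : ℝ => s • B (s • x₀))
        (B (t • x₀) + t • (fderiv ℝ B (t • x₀)) x₀) t := by
      intro t _
      have h1 : HasDerivAt (fun s : ℝ => s • x₀) x₀ t := by
        simpa using (hasDerivAt_id t).smul_const x₀
      have h2 : HasDerivAt (fun s : ℝ => B (s • x₀)) ((fderiv ℝ B (t • x₀)) x₀) t :=
        ((hB.differentiable (by simp) (t • x₀)).hasFDerivAt).comp_hasDerivAt t h1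
      have := (hasDerivAt_id' t).smul h2
      exact this.congr_deriv (by simp [add_comm])
    have hcont : Continuous fun t : ℝ => B (t • x₀) + t • (fderiv ℝ B (t • x₀)) x₀ :=
      (hBc.comp (continuous_id.smul continuous_const)).add
        (continuous_id.smul ((hB'.comp (continuous_id.smul continuous_const)).clm_apply
          continuous_const))
    have hftc := intervalIntegral.integral_eq_sub_of_hasDerivAt hderiv
      (hcont.intervalIntegrable 0 1)
    have hpd : pd2 Z x₀ = ∫ t in (0:ℝ)..1, Kmap A B t x₀ (0, 1) := by
      rw [pd2, hfd, ContinuousLinearMap.intervalIntegral_apply hKint]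
    rw [hpd]
    simp only [hKeval]
    rw [hftc]
    simp

/-! ### Wirtinger calculus helpers -/

lemma pd1_mul {F G : ℝ × ℝ → ℂ} {z : ℝ × ℝ} (hF : DifferentiableAt ℝ F z)
    (hG : DifferentiableAt ℝ G z) :
    pd1 (fun w => F w * G w) z = pd1 F z * G z + F z * pd1 G z := by
  unfold pd1; rw [fderiv_fun_mul hF hG]; simp [smul_eq_mul]; ring

lemma pd2_mul {F G : ℝ × ℝ → ℂ} {z : ℝ × ℝ} (hF : DifferentiableAt ℝ F z)
    (hG : DifferentiableAt ℝ G z) :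
    pd2 (fun w => F w * G w) z = pd2 F z * G z + F z * pd2 G z := by
  unfold pd2; rw [fderiv_fun_mul hF hG]; simp [smul_eq_mul]; ring

lemma wd_mul {F G : ℝ × ℝ → ℂ} {z : ℝ × ℝ} (hF : DifferentiableAt ℝ F z)
    (hG : DifferentiableAt ℝ G z) :
    wd (fun w => F w * G w) z = wd F z * G z + F z * wd G z := by
  unfold wd; rw [pd1_mul hF hG, pd2_mul hF hG]; ring

lemma wdbar_mul {F G : ℝ × ℝ → ℂ} {z : ℝ × ℝ} (hF : DifferentiableAt ℝ F z)
    (hG : DifferentiableAt ℝ G z) :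
    wdbar (fun w => F w * G w) z = wdbar F z * G z + F z * wdbar G z := by
  unfold wdbar; rw [pd1_mul hF hG, pd2_mul hF hG]; ring

noncomputable def conjCLM : ℂ →L[ℝ] ℂ := Complex.conjCLE.toContinuousLinearMap

lemma pd_conj {F : ℝ × ℝ → ℂ} {z : ℝ × ℝ} (hF : DifferentiableAt ℝ F z) (v : ℝ × ℝ) :
    fderiv ℝ (fun w => (starRingEnd ℂ) (F w)) z v = (starRingEnd ℂ) (fderiv ℝ F z v) := by
  have h : HasFDerivAt (fun w => (starRingEnd ℂ) (F w))
      (conjCLM.comp (fderiv ℝ F z)) z :=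
    (conjCLM.hasFDerivAt).comp z hF.hasFDerivAt
  rw [h.fderiv]
  rfl

lemma wd_conj {F : ℝ × ℝ → ℂ} {z : ℝ × ℝ} (hF : DifferentiableAt ℝ F z) :
    wd (fun w => (starRingEnd ℂ) (F w)) z = (starRingEnd ℂ) (wdbar F z) := by
  unfold wd wdbar pd1 pd2
  rw [pd_conj hF, pd_conj hF]
  simp [map_add, map_div₀, map_mul, Complex.conj_I, map_ofNat]
  ring

lemma wdbar_conj {F : ℝ × ℝ → ℂ} {z : ℝ × ℝ} (hF : DifferentiableAt ℝ F z) :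
    wdbar (fun w => (starRingEnd ℂ) (F w)) z = (starRingEnd ℂ) (wd F z) := by
  unfold wd wdbar pd1 pd2
  rw [pd_conj hF, pd_conj hF]
  simp [map_add, map_div₀, map_mul, Complex.conj_I, map_ofNat]

lemma contDiff_conj {F : ℝ × ℝ → ℂ} (hF : ContDiff ℝ (⊤ : ℕ∞) F) :
    ContDiff ℝ (⊤ : ℕ∞) fun w => (starRingEnd ℂ) (F w) :=
  conjCLM.contDiff.comp hF

lemma wd_neg {G : ℝ × ℝ → ℂ} {z : ℝ × ℝ} :
    wd (fun w => -(G w)) z = -(wd G z) := by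
  unfold wd pd1 pd2
  rw [fderiv_fun_neg]
  simp
  ring

/-- If `∂̄U = ∂V`, then the form `U dz + V dz̄` has a primitive. -/
lemma exact_of_wirtinger (U V : ℝ × ℝ → ℂ) (hU : ContDiff ℝ (⊤ : ℕ∞) U) (hV : ContDiff ℝ (⊤ : ℕ∞) V)
    (h : ∀ z, wdbar U z = wd V z) :
    ∃ Z : ℝ × ℝ → ℂ, Differentiable ℝ Z ∧ ∀ z, wd Z z = U z ∧ wdbar Z z = V z := by
  have hcl : ∀ z, pd2 (fun z => U z + V z) z
      = pd1 (fun z => Complex.I * (U z - V z)) z := by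
    intro z
    have hUz : DifferentiableAt ℝ U z := hU.differentiable (by simp) z
    have hVz : DifferentiableAt ℝ V z := hV.differentiable (by simp) z
    have e1 : pd2 (fun z => U z + V z) z = pd2 U z + pd2 V z := by
      unfold pd2; rw [fderiv_fun_add hUz hVz]; simp
    have e2 : pd1 (fun z => Complex.I * (U z - V z)) z
        = Complex.I * (pd1 U z - pd1 V z) := by
      unfold pd1; rw [fderiv_const_mul (hUz.fun_sub hVz), fderiv_fun_sub hUz hVz]
      simp [smul_eq_mul]
    rw [e1, e2]
    have hz := h z
    unfold wdbar wd at hz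
    linear_combination (-2*Complex.I) * hz + (pd2 U z + pd2 V z) * Complex.I_sq
  obtain ⟨Z, hZd, hZ⟩ := exists_primitive (fun z => U z + V z)
    (fun z => Complex.I * (U z - V z)) (hU.add hV)
    (contDiff_const.mul (hU.sub hV)) hcl
  refine ⟨Z, hZd, fun z => ?_⟩
  have h1 := (hZ z).1
  have h2 := (hZ z).2
  constructor
  · unfold wd; rw [h1, h2]
    linear_combination (-(U z - V z)/2) * Complex.I_sq
  · unfold wdbar; rw [h1, h2]
    linear_combination ((U z - V z)/2) * Complex.I_sq

/-- Proposition 4.2(2): solutions of the submanifold Dirac equation (4-1) on a conformal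
surface in `E⁴` produce the coordinates `Z¹, Z²` of the immersion via the generalized
Weierstrass representation: `dZ₁ = fm dz − gn dz̄`, `dZ₂ = f n̄ dz + g m̄ dz̄`. -/
theorem generalized_weierstrass_representation_E4
    (f g m n p : ℝ × ℝ → ℂ)
    (hf : ContDiff ℝ (⊤ : ℕ∞) f) (hg : ContDiff ℝ (⊤ : ℕ∞) g)
    (hm : ContDiff ℝ (⊤ : ℕ∞) m) (hn : ContDiff ℝ (⊤ : ℕ∞) n) (hp : ContDiff ℝ (⊤ : ℕ∞) p)
    (heq1 : ∀ z, wd g z = -(p z * f z))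
    (heq2 : ∀ z, wdbar f z = (starRingEnd ℂ) (p z) * g z)
    (heq3 : ∀ z, wd n z = -((starRingEnd ℂ) (p z) * m z))
    (heq4 : ∀ z, wdbar m z = p z * n z) :
    ∃ Z₁ Z₂ : ℝ × ℝ → ℂ, Differentiable ℝ Z₁ ∧ Differentiable ℝ Z₂ ∧
      ∀ z : ℝ × ℝ,
        wd Z₁ z = f z * m z ∧
        wdbar Z₁ z = -(g z * n z) ∧
        wd Z₂ z = f z * (starRingEnd ℂ) (n z) ∧
        wdbar Z₂ z = g z * (starRingEnd ℂ) (m z) := by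
  have hfz : ∀ z, DifferentiableAt ℝ f z := fun z => hf.differentiable (by simp) z
  have hgz : ∀ z, DifferentiableAt ℝ g z := fun z => hg.differentiable (by simp) z
  have hmz : ∀ z, DifferentiableAt ℝ m z := fun z => hm.differentiable (by simp) z
  have hnz : ∀ z, DifferentiableAt ℝ n z := fun z => hn.differentiable (by simp) z
  obtain ⟨Z₁, hZ₁d, hZ₁⟩ := exact_of_wirtinger (fun z => f z * m z)
    (fun z => -(g z * n z)) (hf.mul hm) ((hg.mul hn).neg) (fun z => by
      rw [wdbar_mul (hfz z) (hmz z)]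
      have : wd (fun w => -(g w * n w)) z = -(wd (fun w => g w * n w) z) := wd_neg
      rw [this, wd_mul (hgz z) (hnz z), heq1 z, heq2 z, heq3 z, heq4 z]
      ring)
  obtain ⟨Z₂, hZ₂d, hZ₂⟩ := exact_of_wirtinger (fun z => f z * (starRingEnd ℂ) (n z))
    (fun z => g z * (starRingEnd ℂ) (m z)) (hf.mul (contDiff_conj hn))
    (hg.mul (contDiff_conj hm)) (fun z => by
      rw [wdbar_mul (hfz z) ((contDiff_conj hn).differentiable (by simp) z),
        wd_mul (hgz z) ((contDiff_conj hm).differentiable (by simp) z),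
        wdbar_conj (hnz z), wd_conj (hmz z), heq2 z, heq3 z, heq4 z, heq1 z]
      simp only [map_neg, map_mul, Complex.conj_conj]
      ring)
  exact ⟨Z₁, Z₂, hZ₁d, hZ₂d, fun z =>
    ⟨(hZ₁ z).1, (hZ₁ z).2, (hZ₂ z).1, (hZ₂ z).2⟩⟩
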